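/- arXiv:1710.10190 — 5 statements merged into one kernel-verified Lean document; each statement's English description precedes it below -/
import Mathlib

section
/- Let G be a group and χ_m, χ_p : G → ℂˣ group homomorphisms such that χ_p(g) is a real number for every g ∈ G; set χ := χ_m·χ_p (pointwise product). Let Γ : G̃^χ → ℂˣ be a group homomorphism with Γ(1,−1) = −1, where G̃^χ = {(g,z₁) ∈ G × ℂˣ : χ(g) = z₁²}. Then: (i) for every (g,z) ∈ G̃^{χ_m} = {(g,z) : χ_m(g) = z²}, the value (z·z₁⁻¹/|z·z₁⁻¹|)·Γ(g,z₁) is the same for both choices of z₁ ∈ ℂˣ with z₁² = χ(g); (ii) the resulting map Γ' : G̃^{χ_m} → ℂˣ, Γ'(g,z) := (z·z₁⁻¹/|z·z₁⁻¹|)·Γ(g,z₁), is a group homomorphism with Γ'(1,−1) = −1; (iii) for every such (g,z) and z₁, the factor z·z₁⁻¹/|z·z₁⁻¹| is a fourth root of unity; and (iv) if |Γ(x)| = 1 for all x ∈ G̃^χ, then |Γ'(y)| = 1 for all y ∈ G̃^{χ_m}. -/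
/-- The `χ`-double cover `G̃^χ = {(g,z) ∈ G × ℂˣ : χ(g) = z²}` as a subgroup of `G × ℂˣ`. -/
def doubleCover {G : Type*} [Group G] (χ : G →* ℂˣ) : Subgroup (G × ℂˣ) where
  carrier := {p : G × ℂˣ | χ p.1 = p.2 ^ 2}
  one_mem' := by simp
  mul_mem' := by
    intro a b ha hb
    simp only [Set.mem_setOf_eq, Prod.fst_mul, Prod.snd_mul, map_mul, mul_pow] at *
    rw [ha, hb]
  inv_mem' := by
    intro a ha
    simp only [Set.mem_setOf_eq, Prod.fst_inv, Prod.snd_inv, map_inv, inv_pow] at *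
    rw [ha]

lemma mem_doubleCover {G : Type*} [Group G] (χ : G →* ℂˣ) (p : G × ℂˣ) :
    p ∈ doubleCover χ ↔ χ p.1 = p.2 ^ 2 := Iff.rfl

lemma one_neg_one_mem_doubleCover {G : Type*} [Group G] (χ : G →* ℂˣ) :
    ((1 : G), (-1 : ℂˣ)) ∈ doubleCover χ := by
  rw [mem_doubleCover]
  simp

/-!
A genuine character `Γ` of `G̃^χ` extends to a character of all of `G × ℂˣ` that is
`w ↦ w / ‖w‖` on `{1} × ℂˣ`, namely `(g, z) ↦ (z z₁⁻¹ / ‖z z₁⁻¹‖) Γ(g, z₁)`: the two choices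
`±z₁` change the sign of both factors. `Γ'` is the restriction of this extension to `G̃^{χ_m}`.
For `w = z z₁⁻¹` one has `w² = χ_p(g)⁻¹ ∈ ℝˣ`, so `(w / ‖w‖)² = ±1`.
-/

noncomputable def unitsPhase : ℂˣ →* ℂˣ where
  toFun w := Units.mk0 ((w : ℂ) / ‖(w : ℂ)‖) (by simp)
  map_one' := by ext; simp
  map_mul' a b := by ext; simp [mul_div_mul_comm]

@[simp]
lemma coe_unitsPhase (w : ℂˣ) : (unitsPhase w : ℂ) = w / ‖(w : ℂ)‖ := rfl

lemma unitsPhase_neg (w : ℂˣ) : unitsPhase (-w) = -unitsPhase w := by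
  ext; simp [neg_div]

lemma norm_unitsPhase (w : ℂˣ) : ‖(unitsPhase w : ℂ)‖ = 1 := by
  simp

lemma unitsPhase_sq_of_im_eq_zero (u : ℂˣ) (h : (u : ℂ).im = 0) : unitsPhase u ^ 2 = 1 := by
  have hu : (u : ℂ) = ((u : ℂ).re : ℂ) := Complex.ext rfl (by simp [h])
  have hre : (u : ℂ).re ≠ 0 := fun h0 => u.ne_zero (by rw [hu, h0, Complex.ofReal_zero])
  ext
  rw [Units.val_pow_eq_pow_val, coe_unitsPhase, hu, Complex.norm_real, Real.norm_eq_abs, div_pow,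
    ← Complex.ofReal_pow, ← Complex.ofReal_pow, sq_abs, Units.val_one,
    div_self (by exact_mod_cast pow_ne_zero 2 hre)]

lemma unitsPhase_pow_four_of_sq_im_eq_zero (w : ℂˣ) (h : ((w ^ 2 : ℂˣ) : ℂ).im = 0) :
    unitsPhase w ^ 4 = 1 := by
  rw [show 4 = 2 * 2 from rfl, pow_mul, ← map_pow, unitsPhase_sq_of_im_eq_zero _ h]

section DoubleCover

variable {G : Type*} [Group G] {χ : G →* ℂˣ}

def IsGenuine (Γ : doubleCover χ →* ℂˣ) : Prop :=
  Γ ⟨((1 : G), (-1 : ℂˣ)), one_neg_one_mem_doubleCover χ⟩ = -1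

lemma exists_mem_doubleCover (χ : G →* ℂˣ) (g : G) : ∃ z : ℂˣ, (g, z) ∈ doubleCover χ := by
  obtain ⟨z, hz⟩ := IsAlgClosed.exists_pow_nat_eq (χ g : ℂ) two_pos
  have hz0 : z ≠ 0 := by rintro rfl; exact (χ g).ne_zero (by simpa using hz.symm)
  exact ⟨Units.mk0 z hz0, Units.ext hz.symm⟩

lemma eq_or_eq_neg_of_mem_doubleCover {g : G} {z z' : ℂˣ} (h : (g, z) ∈ doubleCover χ)
    (h' : (g, z') ∈ doubleCover χ) : z' = z ∨ z' = -z :=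
  Units.sq_eq_sq_iff_eq_or_eq_neg.1 (h'.symm.trans h)

lemma IsGenuine.map_neg {Γ : doubleCover χ →* ℂˣ} (hΓ : IsGenuine Γ) {g : G} {z : ℂˣ}
    (h : (g, z) ∈ doubleCover χ) (h' : (g, -z) ∈ doubleCover χ) :
    Γ ⟨(g, -z), h'⟩ = -Γ ⟨(g, z), h⟩ := by
  have hsplit : (⟨(g, -z), h'⟩ : doubleCover χ)
      = ⟨(g, z), h⟩ * ⟨((1 : G), (-1 : ℂˣ)), one_neg_one_mem_doubleCover χ⟩ := by
    ext <;> simp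
  rw [hsplit, map_mul, hΓ, mul_neg_one]

end DoubleCover

section Extension

variable {G : Type*} [Group G] {χ : G →* ℂˣ} {Γ : doubleCover χ →* ℂˣ}

lemma IsGenuine.unitsPhase_mul_eq (hΓ : IsGenuine Γ) {g : G} (z : ℂˣ) {z₁ z₁' : ℂˣ}
    (h₁ : (g, z₁) ∈ doubleCover χ) (h₁' : (g, z₁') ∈ doubleCover χ) :
    unitsPhase (z * z₁⁻¹) * Γ ⟨(g, z₁), h₁⟩ = unitsPhase (z * z₁'⁻¹) * Γ ⟨(g, z₁'), h₁'⟩ := by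
  obtain rfl | rfl := eq_or_eq_neg_of_mem_doubleCover h₁ h₁'
  · rfl
  · rw [hΓ.map_neg h₁ h₁', inv_neg, mul_neg z, unitsPhase_neg, neg_mul_neg]

variable (Γ) in
noncomputable def extendFun (p : G × ℂˣ) : ℂˣ :=
  unitsPhase (p.2 * (exists_mem_doubleCover χ p.1).choose⁻¹) *
    Γ ⟨(p.1, (exists_mem_doubleCover χ p.1).choose), (exists_mem_doubleCover χ p.1).choose_spec⟩

lemma IsGenuine.extendFun_eq (hΓ : IsGenuine Γ) (g : G) (z : ℂˣ) {z₁ : ℂˣ}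
    (h₁ : (g, z₁) ∈ doubleCover χ) :
    extendFun Γ (g, z) = unitsPhase (z * z₁⁻¹) * Γ ⟨(g, z₁), h₁⟩ :=
  hΓ.unitsPhase_mul_eq z _ h₁

noncomputable def IsGenuine.extend (hΓ : IsGenuine Γ) : G × ℂˣ →* ℂˣ where
  toFun := extendFun Γ
  map_one' := by
    rw [← Prod.mk_one_one, hΓ.extendFun_eq 1 1 (doubleCover χ).one_mem]
    simp only [mul_inv_cancel, map_one, one_mul]
    exact map_one Γ
  map_mul' := fun ⟨g, z⟩ ⟨h, u⟩ => by
    obtain ⟨a, ha⟩ := exists_mem_doubleCover χ g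
    obtain ⟨b, hb⟩ := exists_mem_doubleCover χ h
    rw [Prod.mk_mul_mk, hΓ.extendFun_eq _ _ ((doubleCover χ).mul_mem ha hb),
      hΓ.extendFun_eq g z ha, hΓ.extendFun_eq h u hb, mul_inv, mul_mul_mul_comm, map_mul,
      mul_mul_mul_comm]
    congr 1
    exact map_mul Γ ⟨(g, a), ha⟩ ⟨(h, b), hb⟩

lemma IsGenuine.extend_apply (hΓ : IsGenuine Γ) (g : G) (z : ℂˣ) {z₁ : ℂˣ}
    (h₁ : (g, z₁) ∈ doubleCover χ) :
    hΓ.extend (g, z) = unitsPhase (z * z₁⁻¹) * Γ ⟨(g, z₁), h₁⟩ :=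
  hΓ.extendFun_eq g z h₁

lemma IsGenuine.extend_one_neg_one (hΓ : IsGenuine Γ) : hΓ.extend (1, -1) = -1 := by
  rw [hΓ.extend_apply 1 (-1) (doubleCover χ).one_mem]
  simp only [mul_one, inv_one, unitsPhase_neg, map_one, neg_one_mul, neg_inj]
  exact map_one Γ

lemma IsGenuine.norm_extend (hΓ : IsGenuine Γ) (hunit : ∀ x, ‖(Γ x : ℂ)‖ = 1) (p : G × ℂˣ) :
    ‖(hΓ.extend p : ℂ)‖ = 1 := by
  obtain ⟨z₁, h₁⟩ := exists_mem_doubleCover χ p.1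
  rw [hΓ.extend_apply p.1 p.2 h₁, Units.val_mul, norm_mul, norm_unitsPhase, hunit, one_mul]

end Extension

lemma sq_mul_inv_eq_of_mem_doubleCover {G : Type*} [Group G] {χ χ' : G →* ℂˣ} {g : G}
    {z z₁ : ℂˣ} (hz : (g, z) ∈ doubleCover χ) (h₁ : (g, z₁) ∈ doubleCover (χ * χ')) :
    (z * z₁⁻¹) ^ 2 = (χ' g)⁻¹ := by
  rw [mul_pow, inv_pow, ← (mem_doubleCover _ _).1 hz, ← (mem_doubleCover _ _).1 h₁,
    MonoidHom.mul_apply, mul_inv, mul_inv_cancel_left]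

/-- Transfer of a genuine character from the `χ_m·χ_p`-double cover to the
`χ_m`-double cover, where `χ_p` is real-valued: the defining expression is independent of the
choice of square root `z₁`, defines a genuine homomorphism `Γ'` on `G̃^{χ_m}`, the
correction factor is a fourth root of unity, and unitarity is preserved. -/
theorem statement_4 {G : Type*} [Group G] (χm χp : G →* ℂˣ)
    (hreal : ∀ g : G, ((χp g : ℂ)).im = 0)
    (Γ : (doubleCover (χm * χp)) →* ℂˣ)
    (hΓ : Γ ⟨((1 : G), (-1 : ℂˣ)), one_neg_one_mem_doubleCover (χm * χp)⟩ = -1) :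
    -- (i) independence of the choice of z₁
    (∀ (g : G) (z z₁ z₁' : ℂˣ),
      (g, z) ∈ doubleCover χm →
      ∀ (h₁ : (g, z₁) ∈ doubleCover (χm * χp)) (h₁' : (g, z₁') ∈ doubleCover (χm * χp)),
        ((z : ℂ) * (z₁ : ℂ)⁻¹ / ‖(z : ℂ) * (z₁ : ℂ)⁻¹‖) * (Γ ⟨(g, z₁), h₁⟩ : ℂ)
          = ((z : ℂ) * (z₁' : ℂ)⁻¹ / ‖(z : ℂ) * (z₁' : ℂ)⁻¹‖) *
              (Γ ⟨(g, z₁'), h₁'⟩ : ℂ)) ∧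
    -- (ii) and (iv): Γ' is a genuine homomorphism, unitary if Γ is
    (∃ Γ' : (doubleCover χm) →* ℂˣ,
      (∀ (g : G) (z z₁ : ℂˣ) (hz : (g, z) ∈ doubleCover χm)
          (h₁ : (g, z₁) ∈ doubleCover (χm * χp)),
        (Γ' ⟨(g, z), hz⟩ : ℂ)
          = ((z : ℂ) * (z₁ : ℂ)⁻¹ / ‖(z : ℂ) * (z₁ : ℂ)⁻¹‖) *
              (Γ ⟨(g, z₁), h₁⟩ : ℂ)) ∧
      Γ' ⟨((1 : G), (-1 : ℂˣ)), one_neg_one_mem_doubleCover χm⟩ = -1 ∧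
      ((∀ x : doubleCover (χm * χp), ‖(Γ x : ℂ)‖ = 1) →
        ∀ y : doubleCover χm, ‖(Γ' y : ℂ)‖ = 1)) ∧
    -- (iii) the correction factor is a fourth root of unity
    (∀ (g : G) (z z₁ : ℂˣ),
      (g, z) ∈ doubleCover χm → (g, z₁) ∈ doubleCover (χm * χp) →
      ((z : ℂ) * (z₁ : ℂ)⁻¹ / ‖(z : ℂ) * (z₁ : ℂ)⁻¹‖) ^ 4 = 1) := by
  have hgen : IsGenuine Γ := hΓ
  have hphase (z z₁ : ℂˣ) :
      (z : ℂ) * (z₁ : ℂ)⁻¹ / ‖(z : ℂ) * (z₁ : ℂ)⁻¹‖ = unitsPhase (z * z₁⁻¹) := by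
    rw [coe_unitsPhase, Units.val_mul, Units.val_inv_eq_inv_val]
  refine ⟨fun g z z₁ z₁' _ h₁ h₁' => ?_,
    ⟨hgen.extend.comp (doubleCover χm).subtype, fun g z z₁ _ h₁ => ?_,
      hgen.extend_one_neg_one, fun hunit y => hgen.norm_extend hunit y⟩,
    fun g z z₁ hz h₁ => ?_⟩
  · rw [hphase, hphase, ← Units.val_mul, ← Units.val_mul, hgen.unitsPhase_mul_eq z h₁ h₁']
  · rw [hphase, ← Units.val_mul, ← hgen.extend_apply g z h₁]
    rfl
  · have hsq_real : (((z * z₁⁻¹) ^ 2 : ℂˣ) : ℂ).im = 0 := by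
      rw [sq_mul_inv_eq_of_mem_doubleCover hz h₁, Units.val_inv_eq_inv_val, Complex.inv_im,
        hreal g, neg_zero, zero_div]
    rw [hphase, ← Units.val_pow_eq_pow_val, unitsPhase_pow_four_of_sq_im_eq_zero _ hsq_real,
      Units.val_one]
end

section
/- Let Δ be a finite set equipped with two involutions n, σ : Δ → Δ such that n has no fixed point and n∘σ = σ∘n, and let c : Δ → ℂ satisfy c(n(α)) = −c(α) and c(σ(α)) = −conj(c(α)) for all α ∈ Δ. Suppose N ⊆ Δ satisfies: (a) for every α ∈ N, n(α) ∉ N; and (b) every α ∈ Δ with c(α) real and strictly positive belongs to N. Then #(N ∩ σ(N)) ≤ #N − #{α ∈ Δ : c(α) is real and c(α) > 0}, where σ(N) denotes the image of N under σ. -/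
/-- Let `Δ` be a finite set with a fixed-point-free involution `n` and an
involution `σ` commuting with `n`, and `c : Δ → ℂ` with `c(nα) = -c(α)` and
`c(σα) = -conj(c(α))`. If `N ⊆ Δ` satisfies (a) `α ∈ N → n(α) ∉ N` and (b) every `α` with
`c(α)` real and strictly positive lies in `N`, then
`#(N ∩ σ(N)) ≤ #N − #{α : c(α) real and positive}`. -/
theorem statement_7 {Δ : Type*} [Fintype Δ] [DecidableEq Δ]
    (n σ : Δ → Δ)
    (hnn : ∀ α, n (n α) = α) (hσσ : ∀ α, σ (σ α) = α)
    (hnfix : ∀ α, n α ≠ α) (hcomm : ∀ α, n (σ α) = σ (n α))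
    (c : Δ → ℂ)
    (hcn : ∀ α, c (n α) = -c α)
    (hcσ : ∀ α, c (σ α) = -(starRingEnd ℂ) (c α))
    (N : Finset Δ)
    (ha : ∀ α ∈ N, n α ∉ N)
    (hb : ∀ α : Δ, (c α).im = 0 → 0 < (c α).re → α ∈ N) :
    ((N ∩ N.image σ).card : ℤ) ≤
      (N.card : ℤ) -
        ((Finset.univ.filter (fun α : Δ => (c α).im = 0 ∧ 0 < (c α).re)).card : ℤ) := by
  set P := Finset.univ.filter (fun α : Δ => (c α).im = 0 ∧ 0 < (c α).re) with hP
  have hPN : P ⊆ N := by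
    intro α hα
    simp only [hP, Finset.mem_filter] at hα
    exact hb α hα.2.1 hα.2.2
  have hdisj : Disjoint (N ∩ N.image σ) P := by
    rw [Finset.disjoint_left]
    intro α hα hαP
    simp only [Finset.mem_inter, Finset.mem_image] at hα
    obtain ⟨-, β, hβN, hσβ⟩ := hα
    simp only [hP, Finset.mem_filter] at hαP
    obtain ⟨-, him, hre⟩ := hαP
    have hβ : β = σ α := by rw [← hσβ, hσσ]
    have hcβ : c β = -c α := by
      rw [hβ, hcσ]
      congr 1
      exact Complex.conj_eq_iff_im.2 him
    have h1 : (c (n β)).im = 0 := by rw [hcn, hcβ]; simpa using him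
    have h2 : 0 < (c (n β)).re := by rw [hcn, hcβ]; simpa using hre
    exact ha β hβN (hb _ h1 h2)
  have hsub : (N ∩ N.image σ) ∪ P ⊆ N := by
    intro α hα
    rcases Finset.mem_union.1 hα with h | h
    · exact (Finset.mem_inter.1 h).1
    · exact hPN h
  have := Finset.card_le_card hsub
  rw [Finset.card_union_of_disjoint hdisj] at this
  omega
end

section
/- Let Δ be a finite set equipped with two involutions n, σ : Δ → Δ such that n has no fixed point and n∘σ = σ∘n, and let c : Δ → ℂ satisfy c(n(α)) = −c(α) and c(σ(α)) = −conj(c(α)) for all α ∈ Δ. Suppose N ⊆ Δ satisfies: (a) for every α ∈ N, n(α) ∉ N; and (b) every α ∈ Δ with c(α) real and strictly positive belongs to N. Then equality #(N ∩ σ(N)) = #N − #{α ∈ Δ : c(α) is real and c(α) > 0} holds if and only if every α ∈ N satisfies: σ(α) ∈ N, or c(α) is real and strictly positive. -/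
/-- In the setting of a finite set `Δ` with fixed-point-free involution `n`,
a commuting involution `σ`, and `c : Δ → ℂ` with `c(nα) = -c(α)`, `c(σα) = -conj(c(α))`,
if `N ⊆ Δ` satisfies (a) `α ∈ N → n(α) ∉ N` and (b) every `α` with `c(α)` real and positive
lies in `N`, then `#(N ∩ σ(N)) = #N − #{α : c(α) real and positive}` holds if and only if
every `α ∈ N` satisfies `σ(α) ∈ N`, or `c(α)` is real and strictly positive. -/
theorem statement_8 {Δ : Type*} [Fintype Δ] [DecidableEq Δ]
    (n σ : Δ → Δ)
    (hnn : ∀ α, n (n α) = α) (hσσ : ∀ α, σ (σ α) = α)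
    (hnfix : ∀ α, n α ≠ α) (hcomm : ∀ α, n (σ α) = σ (n α))
    (c : Δ → ℂ)
    (hcn : ∀ α, c (n α) = -c α)
    (hcσ : ∀ α, c (σ α) = -(starRingEnd ℂ) (c α))
    (N : Finset Δ)
    (ha : ∀ α ∈ N, n α ∉ N)
    (hb : ∀ α : Δ, (c α).im = 0 → 0 < (c α).re → α ∈ N) :
    (((N ∩ N.image σ).card : ℤ) =
        (N.card : ℤ) -
          ((Finset.univ.filter (fun α : Δ => (c α).im = 0 ∧ 0 < (c α).re)).card : ℤ)) ↔
      ∀ α ∈ N, σ α ∈ N ∨ ((c α).im = 0 ∧ 0 < (c α).re) := by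
  classical
  set P := Finset.univ.filter (fun α : Δ => (c α).im = 0 ∧ 0 < (c α).re) with hP
  have himg : ∀ α : Δ, α ∈ N.image σ ↔ σ α ∈ N := by
    intro α
    simp only [Finset.mem_image]
    constructor
    · rintro ⟨b, hb', rfl⟩; rwa [hσσ]
    · intro h; exact ⟨σ α, h, hσσ α⟩
  have hPsub : P ⊆ N \ (N ∩ N.image σ) := by
    intro α hα
    simp only [hP, Finset.mem_filter] at hα
    obtain ⟨-, him, hre⟩ := hα
    have hαN : α ∈ N := hb α him hre
    have hreal : c (σ α) = -(c α) := by
      rw [hcσ]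
      congr 1
      apply Complex.ext <;> simp [him]
    have hcnσ : c (n (σ α)) = c α := by rw [hcn, hreal, neg_neg]
    have hn : n (σ α) ∈ N := hb _ (by rw [hcnσ]; exact him) (by rw [hcnσ]; exact hre)
    have hσN : σ α ∉ N := by
      have := ha _ hn
      rwa [hnn] at this
    simp only [Finset.mem_sdiff, Finset.mem_inter, not_and]
    exact ⟨hαN, fun _ hi => hσN ((himg α).mp hi)⟩
  have hsub : N ∩ N.image σ ⊆ N := Finset.inter_subset_left
  have hle : (N ∩ N.image σ).card ≤ N.card := Finset.card_le_card hsub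
  have h1 : (N \ (N ∩ N.image σ)).card = N.card - (N ∩ N.image σ).card :=
    Finset.card_sdiff_of_subset hsub
  constructor
  · intro hcard α hαN
    by_cases hσ : σ α ∈ N
    · exact Or.inl hσ
    · right
      have h2 : P.card = (N \ (N ∩ N.image σ)).card := by omega
      have hPeq : P = N \ (N ∩ N.image σ) :=
        Finset.eq_of_subset_of_card_le hPsub (le_of_eq h2.symm)
      have hmem : α ∈ N \ (N ∩ N.image σ) := by
        simp only [Finset.mem_sdiff, Finset.mem_inter, not_and]
        exact ⟨hαN, fun _ hi => hσ ((himg α).mp hi)⟩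
      rw [← hPeq] at hmem
      simpa [hP] using (Finset.mem_filter.mp hmem).2
  · intro h
    have hPeq : P = N \ (N ∩ N.image σ) := by
      apply Finset.Subset.antisymm hPsub
      intro α hα
      simp only [Finset.mem_sdiff, Finset.mem_inter, not_and] at hα
      obtain ⟨hαN, hnot⟩ := hα
      have hσnot : σ α ∉ N := fun hσ => hnot hαN ((himg α).mpr hσ)
      rcases h α hαN with h' | h'
      · exact absurd h' hσnot
      · simp [hP, h'.1, h'.2]
    have : P.card = N.card - (N ∩ N.image σ).card := by
      rw [hPeq, h1]
    omega
end

section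
/- Let Δ be a finite set equipped with two involutions n, σ : Δ → Δ such that n has no fixed point and n∘σ = σ∘n, and let c : Δ → ℂ satisfy c(n(α)) = −c(α) and c(σ(α)) = −conj(c(α)) for all α ∈ Δ. Suppose N ⊆ Δ satisfies the maximal-reality criterion: every α ∈ N satisfies σ(α) ∈ N or c(α) is real and strictly positive. Define N_p := {α ∈ N : c(α) is not real}. Then for every α ∈ Δ: α ∈ N_p if and only if σ(α) ∈ N_p. -/
/-- In the setting of a finite set `Δ` with fixed-point-free involution `n`,
a commuting involution `σ`, and `c : Δ → ℂ` with `c(nα) = -c(α)`, `c(σα) = -conj(c(α))`,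
suppose `N ⊆ Δ` satisfies the maximal-reality criterion: every `α ∈ N` has `σ(α) ∈ N` or
`c(α)` real and strictly positive. Setting `N_p := {α ∈ N : c(α) not real}`, one has
`α ∈ N_p ↔ σ(α) ∈ N_p` for every `α ∈ Δ`. -/
theorem statement_9 {Δ : Type*} [Fintype Δ] [DecidableEq Δ]
    (n σ : Δ → Δ)
    (hnn : ∀ α, n (n α) = α) (hσσ : ∀ α, σ (σ α) = α)
    (hnfix : ∀ α, n α ≠ α) (hcomm : ∀ α, n (σ α) = σ (n α))
    (c : Δ → ℂ)
    (hcn : ∀ α, c (n α) = -c α)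
    (hcσ : ∀ α, c (σ α) = -(starRingEnd ℂ) (c α))
    (N : Finset Δ)
    (hmax : ∀ α ∈ N, σ α ∈ N ∨ ((c α).im = 0 ∧ 0 < (c α).re)) :
    ∀ α : Δ,
      α ∈ N.filter (fun β => (c β).im ≠ 0) ↔ σ α ∈ N.filter (fun β => (c β).im ≠ 0) := by
  have him : ∀ α, (c (σ α)).im = (c α).im := by
    intro α
    simp [hcσ, Complex.conj_im]
  intro α
  simp only [Finset.mem_filter]
  constructor
  · rintro ⟨hN, hi⟩
    rcases hmax α hN with h | ⟨h0, _⟩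
    · exact ⟨h, by rw [him]; exact hi⟩
    · exact absurd h0 hi
  · rintro ⟨hN, hi⟩
    have hi' : (c α).im ≠ 0 := by rw [← him]; exact hi
    rcases hmax (σ α) hN with h | ⟨h0, _⟩
    · rw [hσσ] at h; exact ⟨h, hi'⟩
    · rw [him] at h0; exact absurd h0 hi'
end

section
/- Let V be a complex vector space, G a group, and ρ : G → GL_ℂ(V) a group homomorphism into the group of ℂ-linear automorphisms of V. Let σ, σ_c : G → G be group homomorphisms with σ∘σ_c = σ_c∘σ, and let θ : V → V be a ℂ-linear map satisfying θ(ρ(g)v) = ρ(σ(σ_c(g)))(θ(v)) for all g ∈ G and v ∈ V. Let h : V × V → ℂ be sesquilinear (ℂ-linear in the first argument, conjugate-linear in the second), positive definite (h(v,v) is a strictly positive real number for every v ≠ 0), and satisfy h(ρ(g)v, w) = h(v, ρ(σ_c(g))⁻¹ w) for all g ∈ G and v, w ∈ V. Let v₀ ∈ V be a nonzero vector with θ(v₀) = v₀. Then for every g ∈ G with σ(g) = g: h(ρ(g)v₀, θ(ρ(g)v₀)) = h(v₀, v₀), and consequently the ratio h(ρ(g)v₀, θ(ρ(g)v₀)) /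 h(ρ(g)v₀, ρ(g)v₀) is a strictly positive real number. -/
/-!
Since `σ g = g` and `σ`, `σc` commute, `θ ∘ ρ g = ρ (σc g) ∘ θ`, and the adjoint property moves
`ρ g` across `h` as `(ρ (σc g))⁻¹`, which cancels it: the twisted form `h(v, θ w)` is invariant
under the `σ`-fixed elements. At `v = w = v₀` this gives `h(v₀, v₀) > 0` for the numerator, and
the denominator is positive because `ρ g v₀ ≠ 0`.
-/

open scoped ComplexOrder

theorem Complex.exists_real_pos_eq_of_pos {z : ℂ} (hz : 0 < z) : ∃ r : ℝ, 0 < r ∧ z = r :=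
  ⟨z.re, (Complex.pos_iff.1 hz).1, Complex.eq_re_of_ofReal_le hz.le⟩

theorem twisted_form_apply_of_fixed {V G X : Type*} [AddCommGroup V] [Module ℂ V] [Group G]
    (ρ : G →* (V ≃ₗ[ℂ] V)) (σ σc : G →* G) (hcomm : ∀ g : G, σ (σc g) = σc (σ g))
    (θ : V → V) (hθ : ∀ (g : G) (v : V), θ (ρ g v) = ρ (σ (σc g)) (θ v))
    (h : V → V → X) (hadj : ∀ (g : G) (v w : V), h (ρ g v) w = h v ((ρ (σc g))⁻¹ w))
    {g : G} (hg : σ g = g) (v w : V) :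
    h (ρ g v) (θ (ρ g w)) = h v (θ w) := by
  rw [hθ, hcomm, hg, hadj]
  exact congrArg (h v) ((ρ (σc g)).symm_apply_apply (θ w))

theorem statement_11_general {V G : Type*} [AddCommGroup V] [Module ℂ V] [Group G]
    (ρ : G →* (V ≃ₗ[ℂ] V))
    (σ σc : G →* G) (hcomm : ∀ g : G, σ (σc g) = σc (σ g))
    (θ : V →ₗ[ℂ] V)
    (hθ : ∀ (g : G) (v : V), θ (ρ g v) = ρ (σ (σc g)) (θ v))
    (h : V → V → ℂ)
    (hpos : ∀ v : V, v ≠ 0 → (h v v).im = 0 ∧ 0 < (h v v).re)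
    (hadj : ∀ (g : G) (v w : V), h (ρ g v) w = h v ((ρ (σc g))⁻¹ w))
    (v₀ : V) (hv₀ : v₀ ≠ 0) (hθv₀ : θ v₀ = v₀) :
    ∀ g : G, σ g = g →
      h (ρ g v₀) (θ (ρ g v₀)) = h v₀ v₀ ∧
      ∃ r : ℝ, 0 < r ∧
        h (ρ g v₀) (θ (ρ g v₀)) / h (ρ g v₀) (ρ g v₀) = (r : ℂ) := by
  intro g hg
  have hpos' : ∀ v : V, v ≠ 0 → 0 < h v v := fun v hv =>
    Complex.pos_iff.2 ⟨(hpos v hv).2, (hpos v hv).1.symm⟩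
  have hfix : h (ρ g v₀) (θ (ρ g v₀)) = h v₀ v₀ := by
    rw [twisted_form_apply_of_fixed ρ σ σc hcomm θ hθ h hadj hg, hθv₀]
  refine ⟨hfix, Complex.exists_real_pos_eq_of_pos ?_⟩
  rw [hfix]
  exact div_pos (hpos' v₀ hv₀) (hpos' _ ((ρ g).map_ne_zero_iff.2 hv₀))

/-- In the setting of Statement 10, if moreover `h` is positive definite and
`v₀ ≠ 0` is a `θ`-fixed vector, then for every `σ`-fixed `g` one has
`h(ρ(g)v₀, θ(ρ(g)v₀)) = h(v₀, v₀)`, and the ratio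
`h(ρ(g)v₀, θ(ρ(g)v₀)) / h(ρ(g)v₀, ρ(g)v₀)` is a strictly positive real number. -/
theorem statement_11 {V G : Type*} [AddCommGroup V] [Module ℂ V] [Group G]
    (ρ : G →* (V ≃ₗ[ℂ] V))
    (σ σc : G →* G) (hcomm : ∀ g : G, σ (σc g) = σc (σ g))
    (θ : V →ₗ[ℂ] V)
    (hθ : ∀ (g : G) (v : V), θ (ρ g v) = ρ (σ (σc g)) (θ v))
    (h : V → V → ℂ)
    (hadd₁ : ∀ v v' w : V, h (v + v') w = h v w + h v' w)
    (hsmul₁ : ∀ (a : ℂ) (v w : V), h (a • v) w = a * h v w)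
    (hadd₂ : ∀ v w w' : V, h v (w + w') = h v w + h v w')
    (hsmul₂ : ∀ (a : ℂ) (v w : V), h v (a • w) = (starRingEnd ℂ) a * h v w)
    (hpos : ∀ v : V, v ≠ 0 → (h v v).im = 0 ∧ 0 < (h v v).re)
    (hadj : ∀ (g : G) (v w : V), h (ρ g v) w = h v ((ρ (σc g))⁻¹ w))
    (v₀ : V) (hv₀ : v₀ ≠ 0) (hθv₀ : θ v₀ = v₀) :
    ∀ g : G, σ g = g →
      h (ρ g v₀) (θ (ρ g v₀)) = h v₀ v₀ ∧
      ∃ r : ℝ, 0 < r ∧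
        h (ρ g v₀) (θ (ρ g v₀)) / h (ρ g v₀) (ρ g v₀) = (r : ℂ) :=
  statement_11_general ρ σ σc hcomm θ hθ h hpos hadj v₀ hv₀ hθv₀
end
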